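/- Let G(z) = Σ_{p=0}^d z^p A_p + Σ_{j=1}^k w_j(z) E_j be a symmetric rational matrix polynomial (all A_p and E_j complex symmetric) and λ ∈ ℂ with all w_j(λ) defined and G(λ) invertible. Then the structured eigenvalue backward error restricted to symmetric perturbation tuples equals the unstructured one: η^{sym}(G,λ) = η(G,λ) = σ_min(G(λ)) / ‖(1, λ, …, λ^d, w₁(λ), …, w_k(λ))‖. -/

import Mathlib

open Matrix

/-- The spectral (operator 2-) norm of a complex matrix. -/
noncomputable def specNorm {n : ℕ} (A : Matrix (Fin n) (Fin n) ℂ) : ℝ :=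
  ‖Matrix.toEuclideanCLM (𝕜 := ℂ) A‖

/-- The Euclidean norm of a complex vector. -/
noncomputable def evNorm {n : ℕ} (v : Fin n → ℂ) : ℝ :=
  ‖(WithLp.equiv 2 (Fin n → ℂ)).symm v‖

/-- The smallest singular value of a complex matrix. -/
noncomputable def sigmaMin {n : ℕ} (A : Matrix (Fin n) (Fin n) ℂ) : ℝ :=
  sInf {r : ℝ | ∃ x : Fin n → ℂ, evNorm x = 1 ∧ r = evNorm (A.mulVec x)}

open scoped InnerProductSpace ComplexConjugate

/-!
Write `G = G(λ) = ∑ᵢ cᵢ Mᵢ` with `c = (1, λ, …, λᵈ, w₁(λ), …, w_k(λ))`. If `G - ∑ᵢ cᵢ Δᵢ` is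
singular then `σ_min(G) ≤ ‖∑ᵢ cᵢ Δᵢ‖ ≤ ‖c‖ ‖(Δᵢ)ᵢ‖` by Cauchy–Schwarz, so every perturbation,
structured or not, has size at least `σ_min(G) / ‖c‖`.

Conversely, let `x` be a unit vector with `‖G x‖ = σ_min(G)`. The symmetric mapping theorem gives
a complex symmetric `Δ` with `Δ x = G x` and `‖Δ‖ ≤ ‖G x‖`: writing `G x = μ x̄ + s q` with
`q ⊥ x̄`, take `Δ = U M Uᵀ` for `U = [x̄ q]` and `M = !![μ, s; s, -conj μ]`, which is
`√(|μ|² + s²)` times a unitary. Then `Δᵢ = (conj cᵢ / ‖c‖²) Δ` is a symmetric perturbation with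
`∑ᵢ cᵢ Δᵢ = Δ`, so `G - ∑ᵢ cᵢ Δᵢ` kills `x`, and its size is `‖Δ‖ / ‖c‖ ≤ σ_min(G) / ‖c‖`.
-/

section InnerProductSpace

variable {𝕜 E : Type*} [RCLike 𝕜] [NormedAddCommGroup E] [InnerProductSpace 𝕜 E]

theorem norm_add_sq_of_inner_eq_zero {x y : E} (h : ⟪x, y⟫_𝕜 = 0) :
    ‖x + y‖ ^ 2 = ‖x‖ ^ 2 + ‖y‖ ^ 2 := by
  rw [norm_add_sq (𝕜 := 𝕜), h, map_zero, mul_zero, add_zero]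

theorem norm_sq_smul_add_smul_le {e f : E} (he : ‖e‖ = 1) (hf : ‖f‖ ≤ 1) (hef : ⟪e, f⟫_𝕜 = 0)
    (a b : 𝕜) : ‖a • e + b • f‖ ^ 2 ≤ ‖a‖ ^ 2 + ‖b‖ ^ 2 := by
  rw [norm_add_sq_of_inner_eq_zero (𝕜 := 𝕜) (by simp [inner_smul_left, inner_smul_right, hef]),
    norm_smul, norm_smul, he, mul_one]
  gcongr
  exact mul_le_of_le_one_right (norm_nonneg b) hf

theorem norm_sq_inner_add_norm_sq_inner_le {e f : E} (he : ‖e‖ = 1) (hf : ‖f‖ ≤ 1)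
    (hef : ⟪e, f⟫_𝕜 = 0) (z : E) : ‖⟪e, z⟫_𝕜‖ ^ 2 + ‖⟪f, z⟫_𝕜‖ ^ 2 ≤ ‖z‖ ^ 2 := by
  have hee : ⟪e, e⟫_𝕜 = 1 := by simp [inner_self_eq_norm_sq_to_K, he]
  set z' := z - ⟪e, z⟫_𝕜 • e
  have hfz' : ⟪f, z'⟫_𝕜 = ⟪f, z⟫_𝕜 := by
    simp [z', inner_sub_right, inner_smul_right, inner_eq_zero_symm.1 hef]
  have hz : ‖z‖ ^ 2 = ‖⟪e, z⟫_𝕜‖ ^ 2 + ‖z'‖ ^ 2 := by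
    have hez' : ⟪⟪e, z⟫_𝕜 • e, z'⟫_𝕜 = 0 := by
      rw [inner_smul_left, inner_sub_right, inner_smul_right, hee, mul_one, sub_self, mul_zero]
    simpa only [z', add_sub_cancel, norm_smul, he, mul_one] using
      norm_add_sq_of_inner_eq_zero hez'
  have hfz : ‖⟪f, z⟫_𝕜‖ ≤ ‖z'‖ :=
    hfz' ▸ (norm_inner_le_norm f z').trans (mul_le_of_le_one_left (norm_nonneg _) hf)
  rw [hz]
  gcongr

end InnerProductSpace

theorem Complex.norm_sq_add_norm_sq_antidiag (μ α β : ℂ) (s : ℝ) :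
    ‖μ * α + s * β‖ ^ 2 + ‖s * α - conj μ * β‖ ^ 2
      = (‖μ‖ ^ 2 + s ^ 2) * (‖α‖ ^ 2 + ‖β‖ ^ 2) := by
  simp only [Complex.sq_norm, Complex.normSq_apply, Complex.add_re, Complex.add_im,
    Complex.sub_re, Complex.sub_im, Complex.mul_re, Complex.mul_im,
    Complex.ofReal_re, Complex.ofReal_im, Complex.conj_re, Complex.conj_im]
  ring

section ComplexInnerProductSpace

variable {E : Type*} [NormedAddCommGroup E] [InnerProductSpace ℂ E]

theorem norm_smul_add_smul_inner_le {e₁ e₂ f₁ f₂ : E}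
    (he₁ : ‖e₁‖ = 1) (he₂ : ‖e₂‖ ≤ 1) (he : ⟪e₁, e₂⟫_ℂ = 0)
    (hf₁ : ‖f₁‖ = 1) (hf₂ : ‖f₂‖ ≤ 1) (hf : ⟪f₁, f₂⟫_ℂ = 0) (μ : ℂ) (s : ℝ) (z : E) :
    ‖(μ * ⟪f₁, z⟫_ℂ + s * ⟪f₂, z⟫_ℂ) • e₁ + (s * ⟪f₁, z⟫_ℂ - conj μ * ⟪f₂, z⟫_ℂ) • e₂‖
      ≤ √(‖μ‖ ^ 2 + s ^ 2) * ‖z‖ := by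
  refine le_of_sq_le_sq ?_ (by positivity)
  calc _ ≤ ‖μ * ⟪f₁, z⟫_ℂ + s * ⟪f₂, z⟫_ℂ‖ ^ 2 + ‖s * ⟪f₁, z⟫_ℂ - conj μ * ⟪f₂, z⟫_ℂ‖ ^ 2 :=
        norm_sq_smul_add_smul_le he₁ he₂ he _ _
    _ = (‖μ‖ ^ 2 + s ^ 2) * (‖⟪f₁, z⟫_ℂ‖ ^ 2 + ‖⟪f₂, z⟫_ℂ‖ ^ 2) :=
        Complex.norm_sq_add_norm_sq_antidiag _ _ _ _
    _ ≤ (‖μ‖ ^ 2 + s ^ 2) * ‖z‖ ^ 2 := by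
        gcongr; exact norm_sq_inner_add_norm_sq_inner_le hf₁ hf₂ hf z
    _ = (√(‖μ‖ ^ 2 + s ^ 2) * ‖z‖) ^ 2 := by
        rw [mul_pow, Real.sq_sqrt (by positivity)]

end ComplexInnerProductSpace

section Matrix

variable {n : ℕ}

theorem evNorm_eq_norm_toLp (v : Fin n → ℂ) : evNorm v = ‖WithLp.toLp 2 v‖ := rfl

theorem evNorm_nonneg (v : Fin n → ℂ) : 0 ≤ evNorm v := norm_nonneg _

theorem evNorm_star (v : Fin n → ℂ) : evNorm (star v) = evNorm v := by
  simp [evNorm_eq_norm_toLp, EuclideanSpace.norm_eq]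

theorem evNorm_smul (c : ℂ) (v : Fin n → ℂ) : evNorm (c • v) = ‖c‖ * evNorm v := by
  rw [evNorm_eq_norm_toLp, WithLp.toLp_smul, norm_smul, evNorm_eq_norm_toLp]

theorem ne_zero_of_evNorm_eq_one {x : Fin n → ℂ} (hx : evNorm x = 1) : x ≠ 0 := by
  rintro rfl
  simp [evNorm_eq_norm_toLp] at hx

theorem inner_toLp_star_toLp (u z : Fin n → ℂ) :
    ⟪WithLp.toLp 2 (star u), WithLp.toLp 2 z⟫_ℂ = u ⬝ᵥ z := by
  rw [EuclideanSpace.inner_toLp_toLp, star_star, dotProduct_comm]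

theorem star_dotProduct_self (x : Fin n → ℂ) : star x ⬝ᵥ x = (evNorm x : ℂ) ^ 2 := by
  rw [dotProduct_comm, ← EuclideanSpace.inner_toLp_toLp, inner_self_eq_norm_sq_to_K]
  rfl

theorem evNorm_add_sq_of_dotProduct_star_eq_zero {u v : Fin n → ℂ} (h : v ⬝ᵥ star u = 0) :
    evNorm (u + v) ^ 2 = evNorm u ^ 2 + evNorm v ^ 2 :=
  norm_add_sq_of_inner_eq_zero (𝕜 := ℂ) (by rwa [EuclideanSpace.inner_toLp_toLp])

theorem evNorm_mulVec_le (A : Matrix (Fin n) (Fin n) ℂ) (x : Fin n → ℂ) :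
    evNorm (A *ᵥ x) ≤ specNorm A * evNorm x :=
  (toEuclideanCLM (𝕜 := ℂ) A).le_opNorm (WithLp.toLp 2 x)

theorem specNorm_le_of_forall_evNorm_mulVec_le {A : Matrix (Fin n) (Fin n) ℂ} {C : ℝ}
    (hC : 0 ≤ C) (h : ∀ x, evNorm (A *ᵥ x) ≤ C * evNorm x) : specNorm A ≤ C :=
  ContinuousLinearMap.opNorm_le_bound _ hC fun v ↦ h (WithLp.ofLp v)

theorem specNorm_nonneg (A : Matrix (Fin n) (Fin n) ℂ) : 0 ≤ specNorm A := norm_nonneg _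

theorem specNorm_smul (c : ℂ) (A : Matrix (Fin n) (Fin n) ℂ) :
    specNorm (c • A) = ‖c‖ * specNorm A := by
  rw [specNorm, map_smul, norm_smul, specNorm]

theorem specNorm_sum_le {ι : Type*} (s : Finset ι) (A : ι → Matrix (Fin n) (Fin n) ℂ) :
    specNorm (∑ i ∈ s, A i) ≤ ∑ i ∈ s, specNorm (A i) := by
  simpa only [specNorm, map_sum] using norm_sum_le s _

/-- `U M Uᵀ` for `U = [u v]` and `M = !![μ, s; s, -conj μ]`. -/
noncomputable def symmRankTwo (μ : ℂ) (s : ℝ) (u v : Fin n → ℂ) : Matrix (Fin n) (Fin n) ℂ :=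
  μ • vecMulVec u u + (s : ℂ) • (vecMulVec v u + vecMulVec u v) - conj μ • vecMulVec v v

theorem isSymm_symmRankTwo (μ : ℂ) (s : ℝ) (u v : Fin n → ℂ) : (symmRankTwo μ s u v).IsSymm := by
  simp only [IsSymm, symmRankTwo, transpose_sub, transpose_add, transpose_smul,
    transpose_vecMulVec, add_comm (vecMulVec u v)]

theorem symmRankTwo_mulVec (μ : ℂ) (s : ℝ) (u v z : Fin n → ℂ) :
    symmRankTwo μ s u v *ᵥ z
      = (μ * (u ⬝ᵥ z) + s * (v ⬝ᵥ z)) • u + (s * (u ⬝ᵥ z) - conj μ * (v ⬝ᵥ z)) • v := by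
  simp only [symmRankTwo, sub_mulVec, add_mulVec, smul_mulVec, vecMulVec_mulVec, op_smul_eq_smul,
    smul_smul, add_smul, sub_smul, smul_add]
  abel

theorem specNorm_symmRankTwo_le {u v : Fin n → ℂ} (hu : evNorm u = 1) (hv : evNorm v ≤ 1)
    (huv : star u ⬝ᵥ v = 0) (μ : ℂ) (s : ℝ) :
    specNorm (symmRankTwo μ s u v) ≤ √(‖μ‖ ^ 2 + s ^ 2) := by
  refine specNorm_le_of_forall_evNorm_mulVec_le (Real.sqrt_nonneg _) fun z ↦ ?_
  have he : ⟪WithLp.toLp 2 u, WithLp.toLp 2 v⟫_ℂ = 0 := by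
    rw [EuclideanSpace.inner_toLp_toLp, dotProduct_comm, huv]
  have hf : ⟪WithLp.toLp 2 (star u), WithLp.toLp 2 (star v)⟫_ℂ = 0 := by
    rw [inner_toLp_star_toLp, dotProduct_comm, ← star_star u, star_dotProduct_star, huv, star_zero]
  have hu' := evNorm_star u ▸ hu
  have hv' := evNorm_star v ▸ hv
  rw [evNorm_eq_norm_toLp] at hu hv hu' hv'
  simpa only [evNorm_eq_norm_toLp, symmRankTwo_mulVec, WithLp.toLp_add, WithLp.toLp_smul,
    inner_toLp_star_toLp] using
    norm_smul_add_smul_inner_le hu hv he hu' hv' hf μ s (WithLp.toLp 2 z)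

theorem exists_isSymm_mulVec_eq {x : Fin n → ℂ} (hx : evNorm x = 1) (b : Fin n → ℂ) :
    ∃ Δ : Matrix (Fin n) (Fin n) ℂ, Δ.IsSymm ∧ Δ *ᵥ x = b ∧ specNorm Δ ≤ evNorm b := by
  set μ := x ⬝ᵥ b
  set w := b - μ • star x
  set s := evNorm w
  -- `q` is a unit vector, or `0` when `w = 0`: hence the bound `‖v‖ ≤ 1` in the lemmas above
  set q := (s : ℂ)⁻¹ • w
  have hxx : star x ⬝ᵥ x = 1 := by simp [star_dotProduct_self, hx]
  have hxw : x ⬝ᵥ w = 0 := by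
    simp [w, μ, dotProduct_sub, dotProduct_smul, dotProduct_comm x (star x), hxx]
  have hxq : x ⬝ᵥ q = 0 := by simp [q, dotProduct_smul, hxw]
  have hsq : (s : ℂ) • q = w := by
    by_cases hs : s = 0
    · have hw : w = 0 := by simpa [s, evNorm_eq_norm_toLp] using hs
      simp [q, hw]
    · exact smul_inv_smul₀ (Complex.ofReal_ne_zero.2 hs) w
  have hq : evNorm q ≤ 1 := by
    have hs : 0 ≤ s := evNorm_nonneg w
    rw [evNorm_smul, norm_inv, Complex.norm_real, Real.norm_of_nonneg hs]
    exact inv_mul_le_one_of_le₀ le_rfl hs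
  have hb : b = μ • star x + (s : ℂ) • q := by rw [hsq, add_sub_cancel]
  have hbn : evNorm b ^ 2 = ‖μ‖ ^ 2 + s ^ 2 := by
    have hwx : w ⬝ᵥ star (μ • star x) = 0 := by simp [dotProduct_comm w, hxw]
    rw [hb, hsq, evNorm_add_sq_of_dotProduct_star_eq_zero hwx, evNorm_smul, evNorm_star, hx,
      mul_one]
  refine ⟨symmRankTwo μ s (star x) q, isSymm_symmRankTwo _ _ _ _, ?_, ?_⟩
  · rw [symmRankTwo_mulVec, hxx, dotProduct_comm, hxq, hb]
    simp
  · calc _ ≤ √(‖μ‖ ^ 2 + s ^ 2) :=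
          specNorm_symmRankTwo_le (by rwa [evNorm_star]) hq (by rwa [star_star]) μ s
      _ = evNorm b := by rw [← hbn, Real.sqrt_sq (evNorm_nonneg b)]

theorem exists_evNorm_eq_one_mulVec_eq_zero {M : Matrix (Fin n) (Fin n) ℂ} (h : M.det = 0) :
    ∃ x, evNorm x = 1 ∧ M *ᵥ x = 0 := by
  obtain ⟨v, hv, hMv⟩ := exists_mulVec_eq_zero_iff.2 h
  refine ⟨((evNorm v : ℂ))⁻¹ • v, ?_, by rw [mulVec_smul, hMv, smul_zero]⟩
  simpa [evNorm_eq_norm_toLp] using norm_smul_inv_norm (𝕜 := ℂ) (x := WithLp.toLp 2 v) (by simpa)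

theorem sigmaMin_le (G : Matrix (Fin n) (Fin n) ℂ) {x : Fin n → ℂ} (hx : evNorm x = 1) :
    sigmaMin G ≤ evNorm (G *ᵥ x) :=
  csInf_le ⟨0, by rintro _ ⟨y, -, rfl⟩; exact evNorm_nonneg _⟩ ⟨x, hx, rfl⟩

theorem exists_evNorm_eq_one_sigmaMin_eq [NeZero n] (G : Matrix (Fin n) (Fin n) ℂ) :
    ∃ x, evNorm x = 1 ∧ sigmaMin G = evNorm (G *ᵥ x) := by
  have hG : {r : ℝ | ∃ x : Fin n → ℂ, evNorm x = 1 ∧ r = evNorm (G *ᵥ x)}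
      = (fun v ↦ ‖toEuclideanCLM (𝕜 := ℂ) G v‖) '' Metric.sphere 0 1 := by
    ext r
    constructor
    · rintro ⟨x, hx, rfl⟩
      exact ⟨WithLp.toLp 2 x, by simpa [evNorm_eq_norm_toLp] using hx, rfl⟩
    · rintro ⟨v, hv, rfl⟩
      exact ⟨WithLp.ofLp v, by simpa [evNorm_eq_norm_toLp] using hv, rfl⟩
  have hf : Continuous fun v : EuclideanSpace ℂ (Fin n) ↦ ‖toEuclideanCLM (𝕜 := ℂ) G v‖ := by
    fun_prop
  have hmem := ((isCompact_sphere 0 1).image hf).sInf_mem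
    ((NormedSpace.sphere_nonempty.2 zero_le_one).image _)
  rwa [← hG] at hmem

theorem sigmaMin_le_specNorm_of_det_sub_eq_zero {G D : Matrix (Fin n) (Fin n) ℂ}
    (h : (G - D).det = 0) : sigmaMin G ≤ specNorm D := by
  obtain ⟨x, hx, hGDx⟩ := exists_evNorm_eq_one_mulVec_eq_zero h
  rw [sub_mulVec, sub_eq_zero] at hGDx
  calc sigmaMin G ≤ evNorm (G *ᵥ x) := sigmaMin_le G hx
    _ ≤ specNorm D := by simpa [hGDx, hx] using evNorm_mulVec_le D x

theorem sigmaMin_of_fin_zero (G : Matrix (Fin 0) (Fin 0) ℂ) : sigmaMin G = 0 := by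
  unfold sigmaMin
  convert Real.sInf_empty
  refine Set.eq_empty_of_forall_notMem ?_
  rintro _ ⟨x, hx, -⟩
  exact ne_zero_of_evNorm_eq_one hx (Subsingleton.elim _ _)

end Matrix

section BackwardError

variable {ι κ : Type*} [Fintype ι] [Fintype κ] {n : ℕ}

/-- For `G = G(λ)` and `c = (1, λ, …, λᵈ, w₁(λ), …, w_k(λ))`, the backward error of `λ` with
respect to the perturbation class `𝒮` is the infimum of this set. -/
def backwardErrors (G : Matrix (Fin n) (Fin n) ℂ) (c : ι → ℂ)
    (𝒮 : Set (ι → Matrix (Fin n) (Fin n) ℂ)) : Set ℝ :=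
  {r | ∃ Δ ∈ 𝒮, (G - ∑ i, c i • Δ i).det = 0 ∧ r = √(∑ i, specNorm (Δ i) ^ 2)}

theorem sigmaMin_div_le_of_mem_backwardErrors {G : Matrix (Fin n) (Fin n) ℂ} {c : ι → ℂ}
    {𝒮 : Set (ι → Matrix (Fin n) (Fin n) ℂ)} {r : ℝ} (hr : r ∈ backwardErrors G c 𝒮) :
    sigmaMin G / √(∑ i, ‖c i‖ ^ 2) ≤ r := by
  obtain ⟨Δ, -, hdet, rfl⟩ := hr
  refine div_le_of_le_mul₀ (Real.sqrt_nonneg _) (Real.sqrt_nonneg _) ?_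
  calc sigmaMin G ≤ specNorm (∑ i, c i • Δ i) := sigmaMin_le_specNorm_of_det_sub_eq_zero hdet
    _ ≤ ∑ i, ‖c i‖ * specNorm (Δ i) := by
        simpa only [specNorm_smul] using specNorm_sum_le Finset.univ fun i ↦ c i • Δ i
    _ ≤ √(∑ i, ‖c i‖ ^ 2) * √(∑ i, specNorm (Δ i) ^ 2) := Real.sum_mul_le_sqrt_mul_sqrt _ _ _
    _ = _ := mul_comm _ _

theorem sum_mul_conj_div_sum_norm_sq {c : ι → ℂ} (hc : ∑ i, ‖c i‖ ^ 2 ≠ 0) :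
    ∑ i, c i * (conj (c i) / (∑ j, ‖c j‖ ^ 2 : ℝ)) = 1 := by
  simp_rw [← mul_div_assoc, Complex.mul_conj, Complex.normSq_eq_norm_sq, ← Finset.sum_div,
    ← Complex.ofReal_sum]
  exact div_self (Complex.ofReal_ne_zero.2 hc)

theorem sigmaMin_div_mem_backwardErrors_isSymm [NeZero n] (G : Matrix (Fin n) (Fin n) ℂ)
    {c : ι → ℂ} (hc : 0 < ∑ i, ‖c i‖ ^ 2) :
    sigmaMin G / √(∑ i, ‖c i‖ ^ 2) ∈ backwardErrors G c {Δ | ∀ i, (Δ i).IsSymm} := by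
  set S := ∑ i, ‖c i‖ ^ 2
  obtain ⟨x, hx, hσ⟩ := exists_evNorm_eq_one_sigmaMin_eq G
  obtain ⟨Δ, hΔ, hΔx, hΔn⟩ := exists_isSymm_mulVec_eq hx (G *ᵥ x)
  -- the minimal-norm way of writing `Δ` as `∑ᵢ cᵢ Δᵢ`
  set Δs : ι → Matrix (Fin n) (Fin n) ℂ := fun i ↦ (conj (c i) / (S : ℂ)) • Δ
  have hsum : ∑ i, c i • Δs i = Δ := by
    simp_rw [Δs, smul_smul, ← Finset.sum_smul]
    rw [sum_mul_conj_div_sum_norm_sq hc.ne', one_smul]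
  have hdet : (G - ∑ i, c i • Δs i).det = 0 := by
    rw [hsum, ← exists_mulVec_eq_zero_iff]
    exact ⟨x, ne_zero_of_evNorm_eq_one hx, by rw [sub_mulVec, hΔx, sub_self]⟩
  have hnorm : √(∑ i, specNorm (Δs i) ^ 2) = specNorm Δ / √S := by
    have : ∑ i, specNorm (Δs i) ^ 2 = specNorm Δ ^ 2 / S := by
      simp_rw [Δs, specNorm_smul, norm_div, Complex.norm_conj, Complex.norm_real,
        Real.norm_of_nonneg hc.le, div_mul_eq_mul_div, div_pow, mul_pow, ← Finset.sum_div,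
        ← Finset.sum_mul]
      field_simp
      exact mul_comm _ _
    rw [this, Real.sqrt_div' _ hc.le, Real.sqrt_sq (specNorm_nonneg Δ)]
  have hmem : specNorm Δ / √S ∈ backwardErrors G c {Δ | ∀ i, (Δ i).IsSymm} :=
    ⟨Δs, fun i ↦ hΔ.smul _, hdet, hnorm.symm⟩
  have hle : specNorm Δ / √S ≤ sigmaMin G / √S := by gcongr; exact hσ ▸ hΔn
  rwa [hle.antisymm (sigmaMin_div_le_of_mem_backwardErrors hmem)] at hmem

theorem backwardErrors_of_fin_zero (G : Matrix (Fin 0) (Fin 0) ℂ) (c : ι → ℂ)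
    (𝒮 : Set (ι → Matrix (Fin 0) (Fin 0) ℂ)) : backwardErrors G c 𝒮 = ∅ :=
  Set.eq_empty_of_forall_notMem fun _ ⟨_, _, hdet, _⟩ ↦ by simp at hdet

theorem sInf_backwardErrors (G : Matrix (Fin n) (Fin n) ℂ) {c : ι → ℂ}
    (hc : 0 < ∑ i, ‖c i‖ ^ 2) {𝒮 : Set (ι → Matrix (Fin n) (Fin n) ℂ)}
    (h𝒮 : {Δ | ∀ i, (Δ i).IsSymm} ⊆ 𝒮) :
    sInf (backwardErrors G c 𝒮) = sigmaMin G / √(∑ i, ‖c i‖ ^ 2) := by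
  obtain rfl | hn := n.eq_zero_or_pos
  · rw [backwardErrors_of_fin_zero, sigmaMin_of_fin_zero, Real.sInf_empty, zero_div]
  · have : NeZero n := .of_pos hn
    refine IsLeast.csInf_eq ⟨?_, fun _ ↦ sigmaMin_div_le_of_mem_backwardErrors⟩
    obtain ⟨Δ, hΔ, h⟩ := sigmaMin_div_mem_backwardErrors_isSymm G hc
    exact ⟨Δ, h𝒮 hΔ, h⟩

theorem backwardErrors_sumElim (a : ι → ℂ) (b : κ → ℂ) (A : ι → Matrix (Fin n) (Fin n) ℂ)
    (E : κ → Matrix (Fin n) (Fin n) ℂ) (𝒮 : Set (ι ⊕ κ → Matrix (Fin n) (Fin n) ℂ)) :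
    backwardErrors (∑ i, a i • A i + ∑ j, b j • E j) (Sum.elim a b) 𝒮 =
      {r | ∃ ΔA ΔE, Sum.elim ΔA ΔE ∈ 𝒮 ∧
        (∑ i, a i • (A i - ΔA i) + ∑ j, b j • (E j - ΔE j)).det = 0 ∧
        r = √(∑ i, specNorm (ΔA i) ^ 2 + ∑ j, specNorm (ΔE j) ^ 2)} := by
  ext r
  simp only [backwardErrors, Set.mem_ofPred_eq, Sum.exists_sum]
  refine exists₂_congr fun ΔA ΔE ↦ and_congr Iff.rfl (and_congr ?_ ?_) <;>
    simp only [Fintype.sum_sum_type, Sum.elim_inl, Sum.elim_inr, smul_sub, Finset.sum_sub_distrib,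
      sub_add_sub_comm]

end BackwardError

theorem symmetric_structured_backward_error_eq_unstructured_general {n d k : ℕ}
    (A : Fin (d + 1) → Matrix (Fin n) (Fin n) ℂ)
    (E : Fin k → Matrix (Fin n) (Fin n) ℂ)
    (lam : ℂ) (w : Fin k → ℂ) :
    sInf {r : ℝ |
        ∃ (ΔA : Fin (d + 1) → Matrix (Fin n) (Fin n) ℂ)
          (ΔE : Fin k → Matrix (Fin n) (Fin n) ℂ),
          (∀ p, (ΔA p)ᵀ = ΔA p) ∧ (∀ j, (ΔE j)ᵀ = ΔE j) ∧
          (∑ p : Fin (d + 1), lam ^ (p : ℕ) • (A p - ΔA p)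
              + ∑ j, w j • (E j - ΔE j)).det = 0 ∧
          r = Real.sqrt (∑ p : Fin (d + 1), specNorm (ΔA p) ^ 2
              + ∑ j, specNorm (ΔE j) ^ 2)} =
      sInf {r : ℝ |
        ∃ (ΔA : Fin (d + 1) → Matrix (Fin n) (Fin n) ℂ)
          (ΔE : Fin k → Matrix (Fin n) (Fin n) ℂ),
          (∑ p : Fin (d + 1), lam ^ (p : ℕ) • (A p - ΔA p)
              + ∑ j, w j • (E j - ΔE j)).det = 0 ∧
          r = Real.sqrt (∑ p : Fin (d + 1), specNorm (ΔA p) ^ 2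
              + ∑ j, specNorm (ΔE j) ^ 2)} ∧
    sInf {r : ℝ |
        ∃ (ΔA : Fin (d + 1) → Matrix (Fin n) (Fin n) ℂ)
          (ΔE : Fin k → Matrix (Fin n) (Fin n) ℂ),
          (∑ p : Fin (d + 1), lam ^ (p : ℕ) • (A p - ΔA p)
              + ∑ j, w j • (E j - ΔE j)).det = 0 ∧
          r = Real.sqrt (∑ p : Fin (d + 1), specNorm (ΔA p) ^ 2
              + ∑ j, specNorm (ΔE j) ^ 2)} =
      sigmaMin (∑ p : Fin (d + 1), lam ^ (p : ℕ) • A p + ∑ j, w j • E j) /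
        Real.sqrt (∑ p : Fin (d + 1), ‖lam ^ (p : ℕ)‖ ^ 2
          + ∑ j, ‖w j‖ ^ 2) := by
  set G := ∑ p : Fin (d + 1), lam ^ (p : ℕ) • A p + ∑ j, w j • E j
  set c : Fin (d + 1) ⊕ Fin k → ℂ := Sum.elim (fun p ↦ lam ^ (p : ℕ)) w
  have hc : 0 < ∑ i, ‖c i‖ ^ 2 :=
    Finset.sum_pos' (fun i _ ↦ by positivity) ⟨.inl 0, Finset.mem_univ _, by simp [c]⟩
  have hsymm := sInf_backwardErrors G hc (𝒮 := {Δ | ∀ i, (Δ i).IsSymm}) subset_rfl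
  have hall := sInf_backwardErrors G hc (Set.subset_univ _)
  simp only [G, c, backwardErrors_sumElim, Set.mem_ofPred_eq, Sum.forall, Sum.elim_inl,
    Sum.elim_inr, IsSymm, Set.mem_univ, true_and, and_assoc, Fintype.sum_sum_type] at hsymm hall
  exact ⟨hsymm.trans hall.symm, hall⟩

/-- For a symmetric rational matrix polynomial, the structured eigenvalue backward error
with respect to symmetric perturbations equals the unstructured one, which equals
`σ_min(G(λ)) / ‖(1,λ,…,λ^d,w₁(λ),…,w_k(λ))‖`. -/
theorem symmetric_structured_backward_error_eq_unstructured {n d k : ℕ}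
    (A : Fin (d + 1) → Matrix (Fin n) (Fin n) ℂ)
    (E : Fin k → Matrix (Fin n) (Fin n) ℂ)
    (hA : ∀ p, (A p)ᵀ = A p) (hE : ∀ j, (E j)ᵀ = E j)
    (lam : ℂ) (w : Fin k → ℂ)
    (hinv : IsUnit (∑ p : Fin (d + 1), lam ^ (p : ℕ) • A p + ∑ j, w j • E j)) :
    sInf {r : ℝ |
        ∃ (ΔA : Fin (d + 1) → Matrix (Fin n) (Fin n) ℂ)
          (ΔE : Fin k → Matrix (Fin n) (Fin n) ℂ),
          (∀ p, (ΔA p)ᵀ = ΔA p) ∧ (∀ j, (ΔE j)ᵀ = ΔE j) ∧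
          (∑ p : Fin (d + 1), lam ^ (p : ℕ) • (A p - ΔA p)
              + ∑ j, w j • (E j - ΔE j)).det = 0 ∧
          r = Real.sqrt (∑ p : Fin (d + 1), specNorm (ΔA p) ^ 2
              + ∑ j, specNorm (ΔE j) ^ 2)} =
      sInf {r : ℝ |
        ∃ (ΔA : Fin (d + 1) → Matrix (Fin n) (Fin n) ℂ)
          (ΔE : Fin k → Matrix (Fin n) (Fin n) ℂ),
          (∑ p : Fin (d + 1), lam ^ (p : ℕ) • (A p - ΔA p)
              + ∑ j, w j • (E j - ΔE j)).det = 0 ∧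
          r = Real.sqrt (∑ p : Fin (d + 1), specNorm (ΔA p) ^ 2
              + ∑ j, specNorm (ΔE j) ^ 2)} ∧
    sInf {r : ℝ |
        ∃ (ΔA : Fin (d + 1) → Matrix (Fin n) (Fin n) ℂ)
          (ΔE : Fin k → Matrix (Fin n) (Fin n) ℂ),
          (∑ p : Fin (d + 1), lam ^ (p : ℕ) • (A p - ΔA p)
              + ∑ j, w j • (E j - ΔE j)).det = 0 ∧
          r = Real.sqrt (∑ p : Fin (d + 1), specNorm (ΔA p) ^ 2
              + ∑ j, specNorm (ΔE j) ^ 2)} =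
      sigmaMin (∑ p : Fin (d + 1), lam ^ (p : ℕ) • A p + ∑ j, w j • E j) /
        Real.sqrt (∑ p : Fin (d + 1), ‖lam ^ (p : ℕ)‖ ^ 2
          + ∑ j, ‖w j‖ ^ 2) :=
  symmetric_structured_backward_error_eq_unstructured_general A E lam w
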